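/- arXiv:1809.05921 — 3 statements merged into one kernel-verified Lean document; each statement's English description precedes it below -/
import Mathlib

section
/- Let g : ℝ → ℝ be a function that is concave on the interval [0, ∞) and satisfies g(0) = 0, and let μ ≥ 0 be a real number. Then the function x ↦ x·g(μ/x) is monotone non-decreasing on (0, ∞); that is, for all real x₁, x₂ with 0 < x₁ ≤ x₂, x₁·g(μ/x₁) ≤ x₂·g(μ/x₂). -/
theorem ConcaveOn.smul_le_map_smul_of_map_zero {𝕜 E β : Type*} [Ring 𝕜] [PartialOrder 𝕜]
    [IsOrderedRing 𝕜] [AddCommGroup E] [Module 𝕜 E] [AddCommMonoid β] [PartialOrder β]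
    [Module 𝕜 β] {s : Set E} {f : E → β} (hf : ConcaveOn 𝕜 s f) (h₀ : (0 : E) ∈ s)
    (hf₀ : f 0 = 0) {x : E} (hx : x ∈ s) {t : 𝕜} (ht₀ : 0 ≤ t) (ht₁ : t ≤ 1) :
    t • f x ≤ f (t • x) := by
  simpa [hf₀] using hf.2 hx h₀ ht₀ (sub_nonneg.2 ht₁) (add_sub_cancel t 1)

/-- If `g` is concave on `[0, ∞)` with `g 0 = 0` and `μ ≥ 0`, then
`x ↦ x * g (μ / x)` is monotone non-decreasing on `(0, ∞)`. -/
theorem stmt_1 (g : ℝ → ℝ) (hconc : ConcaveOn ℝ (Set.Ici (0 : ℝ)) g)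
    (hg0 : g 0 = 0) (μ : ℝ) (hμ : 0 ≤ μ) :
    ∀ x₁ x₂ : ℝ, 0 < x₁ → x₁ ≤ x₂ → x₁ * g (μ / x₁) ≤ x₂ * g (μ / x₂) := by
  intro x₁ x₂ hx₁ hx₁₂
  have hx₂ : 0 < x₂ := hx₁.trans_le hx₁₂
  have key : x₁ / x₂ * g (μ / x₁) ≤ g (x₁ / x₂ * (μ / x₁)) :=
    hconc.smul_le_map_smul_of_map_zero Set.self_mem_Ici hg0 (div_nonneg hμ hx₁.le)
      (div_nonneg hx₁.le hx₂.le) ((div_le_one hx₂).2 hx₁₂)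
  calc x₁ * g (μ / x₁) = x₂ * (x₁ / x₂ * g (μ / x₁)) := by field_simp
    _ ≤ x₂ * g (x₁ / x₂ * (μ / x₁)) := by gcongr
    _ = x₂ * g (μ / x₂) := by field_simp
end

section
/- Let μ ≥ 0 and q ≥ 0 be real numbers, and let Ī : ℝ → ℝ be concave on the interval [0, q], with Ī(0) = 0 and Ī(r) ≥ 0 for all r ∈ [0, q]. Then the function x ↦ Ī(min(μ/x, q))·x is monotone non-decreasing on (0, ∞); that is, for all real x₁, x₂ with 0 < x₁ ≤ x₂, Ī(min(μ/x₁, q))·x₁ ≤ Ī(min(μ/x₂, q))·x₂. -/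
/-!
Concavity together with `Ī 0 ≥ 0` makes the average stall `Ī r / r` non-increasing in `r`.
Stretching the same transactions over more periods lowers the rate `r = min (μ / x) q` but
does not lower the number of transactions actually served, `x * r = min μ (q * x)`. So the
product `(Ī r / r) * (x * r)` can only grow with `x`.
-/

open Set

theorem ConcaveOn.smul_le_map_smul {E : Type*} [AddCommGroup E] [Module ℝ E] {s : Set E}
    {f : E → ℝ} (hf : ConcaveOn ℝ s f) (h0 : (0 : E) ∈ s) (hf0 : 0 ≤ f 0) {x : E} (hx : x ∈ s)
    {t : ℝ} (ht0 : 0 ≤ t) (ht1 : t ≤ 1) : t * f x ≤ f (t • x) := by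
  have h := hf.2 h0 hx (sub_nonneg.2 ht1) ht0 (sub_add_cancel 1 t)
  simp only [smul_zero, zero_add, smul_eq_mul] at h
  linarith [mul_nonneg (sub_nonneg.2 ht1) hf0]

theorem ConcaveOn.antitoneOn_div_self {s : Set ℝ} {f : ℝ → ℝ} (hf : ConcaveOn ℝ s f)
    (h0 : (0 : ℝ) ∈ s) (hf0 : 0 ≤ f 0) : AntitoneOn (fun x ↦ f x / x) (s ∩ Ioi 0) := by
  rintro a ⟨-, ha : 0 < a⟩ b ⟨hb, hb0 : 0 < b⟩ hab
  have h := hf.smul_le_map_smul h0 hf0 hb (div_nonneg ha.le hb0.le) ((div_le_one hb0).2 hab)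
  rw [smul_eq_mul, div_mul_cancel₀ a hb0.ne'] at h
  calc f b / b = a / b * f b / a := by field_simp
    _ ≤ f a / a := by gcongr

theorem stmt_7_general (μ q : ℝ) (hμ : 0 ≤ μ) (hq : 0 ≤ q)
    (Ibar : ℝ → ℝ) (hconc : ConcaveOn ℝ (Set.Icc (0 : ℝ) q) Ibar)
    (hnonneg : ∀ r ∈ Set.Icc (0 : ℝ) q, 0 ≤ Ibar r) :
    ∀ x₁ x₂ : ℝ, 0 < x₁ → x₁ ≤ x₂ →
      Ibar (min (μ / x₁) q) * x₁ ≤ Ibar (min (μ / x₂) q) * x₂ := by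
  intro x₁ x₂ hx₁ hle
  have hx₂ : 0 < x₂ := hx₁.trans_le hle
  by_cases hpos : 0 < μ ∧ 0 < q
  swap
  · have hr : ∀ x, 0 < x → min (μ / x) q = 0 := fun x hx ↦ by
      rcases not_and_or.1 hpos with h | h <;>
        simp [le_antisymm (not_lt.1 h) ‹_›, hq, div_nonneg hμ hx.le]
    rw [hr x₁ hx₁, hr x₂ hx₂]
    exact mul_le_mul_of_nonneg_left hle (hnonneg 0 ⟨le_rfl, hq⟩)
  set r := fun x ↦ min (μ / x) q with hr
  have hr_mem : ∀ x, 0 < x → r x ∈ Icc 0 q ∩ Ioi 0 := fun x hx ↦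
    ⟨⟨by positivity, min_le_right _ _⟩, lt_min (div_pos hpos.1 hx) hpos.2⟩
  have hserved : x₁ * r x₁ ≤ x₂ * r x₂ := by
    simp only [hr, mul_min_of_nonneg _ _ hx₁.le, mul_min_of_nonneg _ _ hx₂.le,
      mul_div_cancel₀ μ hx₁.ne', mul_div_cancel₀ μ hx₂.ne']
    gcongr
  have hrate : r x₂ ≤ r x₁ := min_le_min_right q (div_le_div_of_nonneg_left hμ hx₁ hle)
  have hr₁ := hr_mem x₁ hx₁
  have hr₂ := hr_mem x₂ hx₂
  have hr₁pos : 0 < r x₁ := hr₁.2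
  have hr₂pos : 0 < r x₂ := hr₂.2
  calc Ibar (r x₁) * x₁ = Ibar (r x₁) / r x₁ * (x₁ * r x₁) := by field_simp
    _ ≤ Ibar (r x₂) / r x₂ * (x₂ * r x₂) := by
        have := hconc.antitoneOn_div_self ⟨le_rfl, hq⟩ (hnonneg 0 ⟨le_rfl, hq⟩) hr₂ hr₁ hrate
        exact mul_le_mul this hserved (by positivity) (div_nonneg (hnonneg _ hr₂.1) hr₂pos.le)
    _ = Ibar (r x₂) * x₂ := by field_simp

/-- If `Ī` is concave on `[0, q]`, `Ī 0 = 0` and `Ī ≥ 0` on `[0, q]`, then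
`x ↦ Ī (min (μ / x) q) * x` is monotone non-decreasing on `(0, ∞)`. -/
theorem stmt_7 (μ q : ℝ) (hμ : 0 ≤ μ) (hq : 0 ≤ q)
    (Ibar : ℝ → ℝ) (hconc : ConcaveOn ℝ (Set.Icc (0 : ℝ) q) Ibar)
    (h0 : Ibar 0 = 0) (hnonneg : ∀ r ∈ Set.Icc (0 : ℝ) q, 0 ≤ Ibar r) :
    ∀ x₁ x₂ : ℝ, 0 < x₁ → x₁ ≤ x₂ →
      Ibar (min (μ / x₁) q) * x₁ ≤ Ibar (min (μ / x₂) q) * x₂ :=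
  stmt_7_general μ q hμ hq Ibar hconc hnonneg
end

section
/- Let β, μ, Q, q be natural numbers with β ≥ 1 and Q ≥ 1, and let Ī : ℝ → ℝ be concave on the interval [0, q], with Ī(0) = 0 and Ī(r) ≥ 0 for all r ∈ [0, q]. Define a sequence of natural numbers W by W(0) = ⌈β/Q⌉ and W(k+1) = ⌈(β + Ī(min(μ/W(k), q))·W(k))/Q⌉ (ceiling of the real expression, where μ, q, W(k) are viewed as real numbers). Then for every k, W(k) ≥ 1 and W(k) ≤ W(k+1); that is, the iteration is monotone non-decreasing. -/
/-!
The stall term `w ↦ Ī(min(μ/w, q)) · w` is monotone in `w`: it equals `(Ī(r)/r) · (r w)` with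
`r = min(μ/w, q)`, where `Ī(r)/r` is non-increasing in `r` by concavity and `Ī(0) = 0`, while `r`
decreases and `r w = min(μ, q w)` increases with `w`. Hence the map `W(k) ↦ W(k+1)` is monotone,
and since the stall term is nonnegative, `W(0) ≤ W(1)`; induction does the rest.
-/

open Set

theorem ConcaveOn.mul_apply_le_mul_apply_of_map_zero {𝕜 : Type*} [Field 𝕜] [LinearOrder 𝕜]
    [IsStrictOrderedRing 𝕜] {s : Set 𝕜} {g : 𝕜 → 𝕜} (hg : ConcaveOn 𝕜 s g) (h0s : 0 ∈ s)
    (h0 : g 0 = 0) {x y : 𝕜} (hx : x ∈ s) (hy : y ∈ s) (h0x : 0 ≤ x) (hxy : x ≤ y) :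
    x * g y ≤ y * g x := by
  rcases h0x.eq_or_lt with rfl | hx0
  · simp [h0]
  have hslope := hg.antitoneOn_slope_gt h0s ⟨hx, hx0⟩ ⟨hy, hx0.trans_le hxy⟩ hxy
  simp only [slope_def_field, h0, sub_zero] at hslope
  rwa [div_le_div_iff₀ (hx0.trans_le hxy) hx0, mul_comm, mul_comm (g x)] at hslope

theorem min_div_mul_eq_min_mul {a b w : ℝ} (hw : 0 < w) :
    min (a / w) b * w = min a (b * w) := by
  rw [min_mul_of_nonneg _ _ hw.le, div_mul_cancel₀ _ hw.ne']

theorem monotoneOn_apply_min_div_mul {g : ℝ → ℝ} {μ q : ℝ} (hμ : 0 ≤ μ) (hq : 0 ≤ q)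
    (hg : ConcaveOn ℝ (Icc 0 q) g) (h0 : g 0 = 0) (hg_nonneg : ∀ r ∈ Icc 0 q, 0 ≤ g r) :
    MonotoneOn (fun w ↦ g (min (μ / w) q) * w) (Ici 0) := by
  intro a ha b hb hab
  have hmem : ∀ w, 0 ≤ w → min (μ / w) q ∈ Icc 0 q := fun w hw ↦
    ⟨le_min (div_nonneg hμ hw) hq, min_le_right _ _⟩
  have hrhs : 0 ≤ g (min (μ / b) q) * b := mul_nonneg (hg_nonneg _ (hmem b hb)) hb
  rcases (mem_Ici.mp ha).eq_or_lt with rfl | ha0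
  · simpa using hrhs
  set r := min (μ / a) q
  set r' := min (μ / b) q
  have hr'r : r' ≤ r := min_le_min_right _ (div_le_div_of_nonneg_left hμ ha0 hab)
  have hrab : r * a ≤ r' * b := by
    rw [min_div_mul_eq_min_mul ha0, min_div_mul_eq_min_mul (ha0.trans_le hab)]
    exact min_le_min_left _ (mul_le_mul_of_nonneg_left hab hq)
  have hslope : r' * g r ≤ r * g r' :=
    hg.mul_apply_le_mul_apply_of_map_zero ⟨le_rfl, hq⟩ h0 (hmem b hb) (hmem a ha)
      (hmem b hb).1 hr'r
  rcases (hmem a ha).1.eq_or_lt with hr0 | hr0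
  · simpa [← hr0, h0] using hrhs
  refine le_of_mul_le_mul_left ?_ hr0
  calc r * (g r * a) = g r * (r * a) := by ring
    _ ≤ g r * (r' * b) := mul_le_mul_of_nonneg_left hrab (hg_nonneg r (hmem a ha))
    _ = r' * g r * b := by ring
    _ ≤ r * g r' * b := mul_le_mul_of_nonneg_right hslope hb
    _ = r * (g r' * b) := by ring

/-- The fixed-point iteration `W(0) = ⌈β/Q⌉`,
`W(k+1) = ⌈(β + Ī(min(μ/W(k), q)) * W(k)) / Q⌉` is monotone non-decreasing and
always at least `1`. -/
theorem stmt_8 (β μ Q q : ℕ) (hβ : 1 ≤ β) (hQ : 1 ≤ Q)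
    (Ibar : ℝ → ℝ) (hconc : ConcaveOn ℝ (Set.Icc (0 : ℝ) (q : ℝ)) Ibar)
    (h0 : Ibar 0 = 0) (hnonneg : ∀ r ∈ Set.Icc (0 : ℝ) (q : ℝ), 0 ≤ Ibar r)
    (W : ℕ → ℕ) (hW0 : W 0 = ⌈(β : ℝ) / (Q : ℝ)⌉₊)
    (hWk : ∀ k : ℕ,
      W (k + 1) =
        ⌈((β : ℝ) + Ibar (min ((μ : ℝ) / (W k : ℝ)) (q : ℝ)) * (W k : ℝ)) / (Q : ℝ)⌉₊) :
    ∀ k : ℕ, 1 ≤ W k ∧ W k ≤ W (k + 1) := by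
  set stall : ℕ → ℝ := fun w ↦ Ibar (min ((μ : ℝ) / w) q) * w
  have hstall_mono : Monotone stall := fun a b hab ↦
    monotoneOn_apply_min_div_mul μ.cast_nonneg q.cast_nonneg hconc h0 hnonneg
      (mem_Ici.mpr a.cast_nonneg) (mem_Ici.mpr b.cast_nonneg) (Nat.cast_le.mpr hab)
  have hstep : ∀ {a b : ℕ}, a ≤ b →
      ⌈((β : ℝ) + stall a) / Q⌉₊ ≤ ⌈((β : ℝ) + stall b) / Q⌉₊ := fun hab ↦
    Nat.ceil_mono (div_le_div_of_nonneg_right (by linarith [hstall_mono hab]) Q.cast_nonneg)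
  have hmono : ∀ k, W k ≤ W (k + 1) := by
    intro k
    induction k with
    -- `W 0` is the iteration map evaluated at `w = 0`, where the stall term vanishes.
    | zero => simpa [hW0, hWk 0, stall] using hstep (Nat.zero_le (W 0))
    | succ k ih => rw [hWk k, hWk (k + 1)]; exact hstep ih
  have hW0_pos : 1 ≤ W 0 := by
    rw [hW0, Nat.one_le_ceil_iff]
    positivity
  exact fun k ↦ ⟨hW0_pos.trans (monotone_nat_of_le_succ hmono k.zero_le), hmono k⟩
end
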